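/- Let R be a ring. Then R is a left small ring (R as a left R-module is a small module) if and only if every injective left R-module M satisfies Rad(M) = M, where Rad(M) is the intersection of all maximal proper submodules of M (equal to M if M has no maximal proper submodule). -/

import Mathlib

universe u

/-- A left `R`-module `K` is a *small module* if there exist a left `R`-module `L` and an
injective `R`-linear map `f : K → L` whose image is a superfluous submodule of `L`. -/
def IsSmallModule (R : Type u) [Ring R] (K : Type u) [AddCommGroup K] [Module R K] : Prop :=
  ∃ (L : Type u) (_ : AddCommGroup L) (_ : Module R L) (f : K →ₗ[R] L),
    Function.Injective f ∧
      ∀ X : Submodule R L, LinearMap.range f ⊔ X = ⊤ → X = ⊤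

/-!
A superfluous submodule lies in every maximal submodule, hence in the radical, and linear maps
send radicals into radicals. So if `R ↪ L` is superfluous and `M` is injective, extending
`r ↦ r • x` to `L → M` puts every `x ∈ M` into `Rad M`. Conversely, embed `R` into an injective
module `J`; then `R` is a cyclic submodule of `Rad J = J`, and a finitely generated submodule of
the radical is superfluous, since otherwise some proper `X` with `R + X = J` would make `J / X` a
nonzero finitely generated module, which has a maximal submodule.
-/

namespace Submodule

variable {R M : Type*} [Ring R] [AddCommGroup M] [Module R M]

def IsSuperfluous (N : Submodule R M) : Prop :=
  ∀ X : Submodule R M, N ⊔ X = ⊤ → X = ⊤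

theorem IsSuperfluous.le_jacobson {N : Submodule R M} (hN : N.IsSuperfluous) :
    N ≤ Module.jacobson R M :=
  le_sInf fun m (hm : IsCoatom m) ↦ by
    obtain htop | heq := hm.le_iff.mp (le_sup_right : m ≤ N ⊔ m)
    · exact absurd (hN m htop) hm.1
    · exact heq ▸ le_sup_left

theorem FG.isSuperfluous_of_le_jacobson {N : Submodule R M} (hfg : N.FG)
    (hN : N ≤ Module.jacobson R M) : N.IsSuperfluous := by
  intro X hX
  by_contra hXtop
  have hmap : Submodule.map X.mkQ N = ⊤ := (map_mkQ_eq_top X N).mpr (sup_comm N X ▸ hX)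
  have : Nontrivial (M ⧸ X) := Quotient.nontrivial_iff.mpr hXtop
  have : Module.Finite R (M ⧸ X) := ⟨hmap ▸ hfg.map X.mkQ⟩
  have hle : (⊤ : Submodule R (M ⧸ X)) ≤ Module.jacobson R (M ⧸ X) :=
    hmap ▸ (Submodule.map_mono hN).trans (Module.map_jacobson_le X.mkQ)
  exact (Module.jacobson_lt_top R (M ⧸ X)).not_ge hle

end Submodule

theorem Module.exists_injective_linearMap_to_injective (R : Type u) [Ring R] (K : Type u)
    [AddCommGroup K] [Module R K] :
    ∃ (J : Type u) (_ : AddCommGroup J) (_ : Module R J) (f : K →ₗ[R] J),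
      Module.Injective R J ∧ Function.Injective f := by
  let ι := CategoryTheory.Injective.ι (ModuleCat.of R K)
  exact ⟨_, _, _, ι.hom, (Module.injective_iff_injective_object R _).mpr
    (CategoryTheory.Injective.injective_under _),
    (ModuleCat.mono_iff_injective ι).mp inferInstance⟩

section

variable {R : Type u} [Ring R] {K : Type u} [AddCommGroup K] [Module R K]

theorem IsSmallModule.range_le_jacobson (hK : IsSmallModule R K) {M : Type u} [AddCommGroup M]
    [Module R M] [Module.Injective R M] (g : K →ₗ[R] M) :
    LinearMap.range g ≤ Module.jacobson R M := by
  obtain ⟨L, _, _, f, hf, hsmall⟩ := hK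
  obtain ⟨h, hhf⟩ := Module.Injective.out f hf g
  have hg : g = h ∘ₗ f := LinearMap.ext fun x ↦ (hhf x).symm
  rw [hg, LinearMap.range_comp]
  exact (Submodule.map_mono (Submodule.IsSuperfluous.le_jacobson hsmall)).trans
    (Module.map_jacobson_le h)

theorem IsSmallModule.of_finite [Module.Finite R K]
    (h : ∀ (M : Type u) [AddCommGroup M] [Module R M], Module.Injective R M →
      Module.jacobson R M = ⊤) : IsSmallModule R K := by
  obtain ⟨J, _, _, f, hJ, hf⟩ := Module.exists_injective_linearMap_to_injective R K
  refine ⟨J, _, _, f, hf, Submodule.FG.isSuperfluous_of_le_jacobson ?_ ?_⟩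
  · exact LinearMap.range_eq_map f ▸ Module.Finite.fg_top.map f
  · rw [h J hJ]; exact le_top

end

/-- `R` is a left small ring iff every injective left `R`-module `M` satisfies `Rad(M) = M`,
where `Rad(M)` is the intersection of all maximal proper submodules of `M`. -/
theorem stmt_19 (R : Type u) [Ring R] :
    IsSmallModule R R ↔
      ∀ (M : Type u) [AddCommGroup M] [Module R M], Module.Injective R M →
        sInf {m : Submodule R M | IsCoatom m} = ⊤ := by
  refine ⟨fun hR M _ _ _ ↦ top_unique fun x _ ↦ ?_, IsSmallModule.of_finite⟩
  exact hR.range_le_jacobson (LinearMap.toSpanSingleton R M x) ⟨1, one_smul R x⟩
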